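/- Let K be a division ring, σ an endomorphism of K, δ a σ-derivation of K, and f(t) ∈ R = K[t;σ,δ] a nonzero polynomial of degree n whose right roots lie in the (σ,δ)-conjugacy classes Δ(a₁),…,Δ(a_r). Then Σᵢ₌₁ʳ dim_{C(aᵢ)} ker(f(T_{aᵢ})) ≤ n, where C(aᵢ) = C^{σ,δ}(aᵢ), ker(f(T_{aᵢ})) is a right C(aᵢ)-vector subspace of K, and f(T_a) denotes the additive map obtained by substituting the pseudo-linear map T_a for t in f. -/

import Mathlib

/-!
Through `T_a`, every `a : K` makes `K` a left `R`-module (`evalT`), and right multiplication by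
`x ≠ 0` intertwines the modules of `a ^ x` and of `a`: `f(T_a)(y x) = f(T_{a^x})(y) x`.
So a nonzero `x₀ ∈ ker f(T_{a_{i₀}})` makes `b = a_{i₀} ^ x₀` a right root of `f`, whence
`f = g (t - b)` with `deg g = deg f - 1` and `f(T_a) = g(T_a) ∘ (T_a - b)`. The map `T_a - b` is
right `C(a)`-linear; its kernel is `x₀ C(a)` for `a = a_{i₀}` and zero for every `a_i` outside
`Δ(a_{i₀})`. It therefore maps `B_{i₀} \ {x₀}` and the other `B_i` injectively onto right
independent subsets of the kernels of `g(T_{a_i})`, and induction on the degree concludes.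
-/

open Finset

namespace OreExtension

variable {K : Type*} [DivisionRing K] (σ : K →+* K) (δ : K →+ K)

/-- The `(σ, δ)`-conjugate `a ^ x`. -/
def conj (x a : K) : K := σ x * a * x⁻¹ + δ x * x⁻¹

def centralizer (a : K) : Set K := {u | u = 0 ∨ conj σ δ u a = a}

def RightIndependent (a : K) (B : Finset K) : Prop :=
  ∀ g : K → K, (∀ x, g x ∈ centralizer σ δ a) → ∑ x ∈ B, x * g x = 0 → ∀ x ∈ B, g x = 0

def IndependentModKer (φ : K →+ K) (a : K) (S : Finset K) : Prop :=
  ∀ g : K → K, (∀ x, g x ∈ centralizer σ δ a) → φ (∑ x ∈ S, x * g x) = 0 → ∀ x ∈ S, g x = 0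

def T (a : K) : AddMonoid.End K where
  toFun y := σ y * a + δ y
  map_zero' := by simp
  map_add' x y := by simp only [map_add, add_mul]; abel

@[simp]
lemma T_apply (a y : K) : T σ δ a y = σ y * a + δ y := rfl

def mulLeft : K →+ AddMonoid.End K := AddMonoidHom.mul

@[simp]
lemma mulLeft_apply (u y : K) : mulLeft u y = u * y := rfl

lemma mulLeft_mul (u v : K) : mulLeft (u * v) = mulLeft u * mulLeft v := by
  ext y
  exact mul_assoc u v y

lemma conj_neg (x a : K) : conj σ δ (-x) a = conj σ δ x a := by
  simp [conj]

variable {σ δ}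

lemma neg_mem_centralizer {u a : K} (hu : u ∈ centralizer σ δ a) : -u ∈ centralizer σ δ a := by
  rcases hu with rfl | hu
  · exact Or.inl neg_zero
  · exact Or.inr ((conj_neg σ δ u a).trans hu)

lemma RightIndependent.independentModKer {a : K} {B : Finset K} (hB : RightIndependent σ δ a B)
    {φ : K →+ K} (hφ : ∀ w, φ w = 0 → w = 0) : IndependentModKer σ δ φ a B :=
  fun g hg h => hB g hg (hφ _ h)

lemma RightIndependent.independentModKer_erase [DecidableEq K] {a : K} {B : Finset K}
    (hB : RightIndependent σ δ a B) {x₀ : K} (hx₀ : x₀ ∈ B) {φ : K →+ K}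
    (hφ : ∀ w, φ w = 0 → ∃ u ∈ centralizer σ δ a, w = x₀ * u) :
    IndependentModKer σ δ φ a (B.erase x₀) := by
  intro g hg hsum x hx
  obtain ⟨u, hu, hsum⟩ := hφ _ hsum
  have h := hB (Function.update g x₀ (-u))
    (fun z => by
      rcases eq_or_ne z x₀ with rfl | hz
      · simpa using neg_mem_centralizer hu
      · simpa [hz] using hg z)
    (by
      rw [← sum_erase_add _ _ hx₀, Function.update_self,
        sum_congr rfl fun z hz => by rw [Function.update_of_ne (ne_of_mem_erase hz)], hsum,
        mul_neg, add_neg_cancel])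
    x (mem_of_mem_erase hx)
  rwa [Function.update_of_ne (ne_of_mem_erase hx)] at h

section Derivation

variable (hδ : ∀ a b : K, δ (a * b) = σ a * δ b + δ a * b)
include hδ

lemma delta_one : δ 1 = 0 := by
  simpa using hδ 1 1

lemma conj_one (a : K) : conj σ δ 1 a = a := by
  simp [conj, delta_one hδ]

lemma conj_mul (x : K) {y : K} (hy : y ≠ 0) (a : K) :
    conj σ δ (x * y) a = conj σ δ x (conj σ δ y a) := by
  simp only [conj, map_mul, hδ, mul_inv_rev, mul_add, add_mul, mul_assoc,
    mul_inv_cancel_left₀ hy, add_assoc]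

lemma conj_inv_conj {x : K} (hx : x ≠ 0) (a : K) : conj σ δ x⁻¹ (conj σ δ x a) = a := by
  rw [← conj_mul hδ _ hx, inv_mul_cancel₀ hx, conj_one hδ]

lemma one_mem_centralizer (a : K) : 1 ∈ centralizer σ δ a :=
  Or.inr (conj_one hδ a)

lemma T_one (a : K) : T σ δ a 1 = a := by
  simp [delta_one hδ]

lemma T_mul_mulLeft (a u : K) :
    T σ δ a * mulLeft u = mulLeft (σ u) * T σ δ a + mulLeft (δ u) := by
  ext y
  change σ (u * y) * a + δ (u * y) = σ u * (σ y * a + δ y) + δ u * y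
  rw [map_mul, hδ, mul_add, mul_assoc]
  abel

lemma T_apply_mul {x : K} (hx : x ≠ 0) (a y : K) :
    T σ δ a (y * x) = T σ δ (conj σ δ x a) y * x := by
  simp only [T_apply, conj, map_mul, hδ, add_mul, mul_add, mul_assoc, inv_mul_cancel₀ hx,
    mul_one]
  abel

lemma pow_T_apply_mul {x : K} (hx : x ≠ 0) (a y : K) (j : ℕ) :
    (T σ δ a ^ j) (y * x) = (T σ δ (conj σ δ x a) ^ j) y * x := by
  induction j generalizing y with
  | zero => rfl
  | succ j ih =>
    rw [pow_succ', AddMonoid.End.coe_mul, Function.comp_apply, ih, T_apply_mul hδ hx, pow_succ']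
    rfl

lemma T_apply_eq_mul_iff {w : K} (hw : w ≠ 0) (a b : K) :
    T σ δ a w = b * w ↔ conj σ δ w a = b := by
  have h := T_apply_mul hδ hw a 1
  rw [one_mul, T_one hδ] at h
  rw [h, mul_left_inj' hw]

lemma inv_mul_mem_centralizer_of_T_apply_eq {x w a : K} (hx : x ≠ 0)
    (hw : T σ δ a w = conj σ δ x a * w) : x⁻¹ * w ∈ centralizer σ δ a := by
  rcases eq_or_ne w 0 with rfl | hw0
  · exact Or.inl (mul_zero _)
  · exact Or.inr (by
      rw [conj_mul hδ _ hw0, (T_apply_eq_mul_iff hδ hw0 a _).1 hw, conj_inv_conj hδ hx])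

lemma eq_conj_of_T_apply_eq {x w a a' : K} (hx : x ≠ 0) (hw : w ≠ 0)
    (h : T σ δ a' w = conj σ δ x a * w) : a' = conj σ δ (w⁻¹ * x) a := by
  rw [conj_mul hδ _ hx, ← (T_apply_eq_mul_iff hδ hw a' _).1 h, conj_inv_conj hδ hw]

lemma RightIndependent.ne_zero {a : K} {B : Finset K} (hB : RightIndependent σ δ a B) {x : K}
    (hx : x ∈ B) : x ≠ 0 := by
  classical
  rintro rfl
  have h := hB (fun z => if z = 0 then 1 else 0)
    (fun z => by split_ifs; exacts [one_mem_centralizer hδ a, Or.inl rfl])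
    (sum_eq_zero fun z _ => by split_ifs with hz <;> simp [hz]) 0 hx
  simp at h

lemma IndependentModKer.injOn {a : K} {φ : K →+ K} {S : Finset K}
    (hS : IndependentModKer σ δ φ a S) : Set.InjOn φ S := by
  classical
  intro x hx x' hx' h
  by_contra hne
  have := hS (fun z => if z = x then 1 else if z = x' then -1 else 0)
    (fun z => by
      split_ifs
      exacts [one_mem_centralizer hδ a, neg_mem_centralizer (one_mem_centralizer hδ a),
        Or.inl rfl])
    (by
      rw [← sum_subset (s₁ := {x, x'}) (insert_subset hx (singleton_subset_iff.2 hx'))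
        (fun z _ hz => by simp_all), sum_pair hne]
      simp [Ne.symm hne, h, ← sub_eq_add_neg])
    x hx
  simp at this

lemma IndependentModKer.rightIndependent_image [DecidableEq K] {a : K} {φ : K →+ K}
    (hφ : ∀ u ∈ centralizer σ δ a, ∀ y, φ (y * u) = φ y * u) {S : Finset K}
    (hS : IndependentModKer σ δ φ a S) : RightIndependent σ δ a (S.image φ) := by
  intro g hg hsum
  rw [sum_image (hS.injOn hδ)] at hsum
  simp only [mem_image, forall_exists_index, and_imp, forall_apply_eq_imp_iff₂]
  refine hS (fun x => g (φ x)) (fun x => hg _) ?_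
  rw [map_sum, ← hsum]
  exact sum_congr rfl fun x _ => hφ _ (hg _) x

end Derivation

section Polynomial

variable {R : Type*} [Ring R] (ι : K →+* R) (t : R)

noncomputable def ofCoeffs : (ℕ →₀ K) →+ R :=
  Finsupp.liftAddHom fun i => (AddMonoidHom.mulRight (t ^ i)).comp ι.toAddMonoidHom

lemma ofCoeffs_apply (c : ℕ →₀ K) : ofCoeffs ι t c = c.sum fun i b => ι b * t ^ i := by
  simp [ofCoeffs, Finsupp.liftAddHom_apply]
  rfl

@[simp]
lemma ofCoeffs_single (i : ℕ) (u : K) : ofCoeffs ι t (Finsupp.single i u) = ι u * t ^ i := by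
  simp [ofCoeffs]

variable (σ δ) in
/-- `R` is the Ore extension `K[t; σ, δ]`, presented through `ι : K →+* R` and `t`. -/
structure IsOreExtension : Prop where
  map_mul_delta : ∀ a b : K, δ (a * b) = σ a * δ b + δ a * b
  t_mul : ∀ x : K, t * ι x = ι (σ x) * t + ι (δ x)
  bijective_ofCoeffs : Function.Bijective (ofCoeffs ι t)

variable (σ δ) in
noncomputable def polyT (a : K) : (ℕ →₀ K) →+ AddMonoid.End K :=
  Finsupp.liftAddHom fun j => (AddMonoidHom.mulRight (T σ δ a ^ j)).comp mulLeft

lemma polyT_apply_apply (a : K) (c : ℕ →₀ K) (x : K) :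
    polyT σ δ a c x = c.sum fun j b => b * (T σ δ a ^ j) x := by
  rw [polyT, Finsupp.liftAddHom_apply, Finsupp.sum, Finsupp.sum]
  exact AddMonoidHom.finsetSum_apply _ _ _

variable {ι t} (hR : IsOreExtension σ δ ι t)

noncomputable def coeff : R ≃+ (ℕ →₀ K) :=
  (AddEquiv.ofBijective (ofCoeffs ι t) hR.bijective_ofCoeffs).symm

/-- `evalT hR a f = f(T_a)`. -/
noncomputable def evalT (a : K) : R →+ AddMonoid.End K :=
  (polyT σ δ a).comp (coeff hR).toAddMonoidHom

include hR in
@[elab_as_elim]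
lemma induction_on {P : R → Prop} (f : R) (zero : P 0) (add : ∀ f g, P f → P g → P (f + g))
    (monomial : ∀ u i, P (ι u * t ^ i)) : P f := by
  obtain ⟨c, rfl⟩ := hR.bijective_ofCoeffs.2 f
  induction c using Finsupp.induction_linear with
  | zero => simpa using zero
  | add c d hc hd => simpa using add _ _ hc hd
  | single i u => simpa using monomial u i

lemma coeff_ofCoeffs (c : ℕ →₀ K) : coeff hR (ofCoeffs ι t c) = c :=
  (AddEquiv.ofBijective _ hR.bijective_ofCoeffs).symm_apply_apply c

lemma ofCoeffs_coeff (f : R) : ofCoeffs ι t (coeff hR f) = f :=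
  (AddEquiv.ofBijective _ hR.bijective_ofCoeffs).apply_symm_apply f

lemma coeff_monomial (u : K) (i : ℕ) : coeff hR (ι u * t ^ i) = Finsupp.single i u := by
  rw [← ofCoeffs_single, coeff_ofCoeffs]

lemma coeff_mul_t (f : R) (k : ℕ) : coeff hR (f * t) (k + 1) = coeff hR f k := by
  induction f using induction_on hR with
  | zero => simp
  | add f g hf hg => simp [add_mul, hf, hg]
  | monomial u i =>
    rw [mul_assoc, ← pow_succ, coeff_monomial, coeff_monomial]
    simp [Finsupp.single_apply]

lemma evalT_ofCoeffs (a : K) (c : ℕ →₀ K) : evalT hR a (ofCoeffs ι t c) = polyT σ δ a c := by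
  change polyT σ δ a (coeff hR (ofCoeffs ι t c)) = _
  rw [coeff_ofCoeffs]

lemma evalT_monomial (a u : K) (i : ℕ) :
    evalT hR a (ι u * t ^ i) = mulLeft u * T σ δ a ^ i := by
  rw [← ofCoeffs_single, evalT_ofCoeffs]
  simp [polyT]

lemma evalT_ι (a u : K) : evalT hR a (ι u) = mulLeft u := by
  simpa using evalT_monomial hR a u 0

lemma evalT_t (a : K) : evalT hR a t = T σ δ a := by
  ext y
  simpa using congr($(evalT_monomial hR a 1 1) y)

lemma evalT_sub_ι_apply (a : K) (f : R) (b y : K) :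
    evalT hR a (f - ι b) y = evalT hR a f y - b * y := by
  rw [map_sub, evalT_ι]
  rfl

lemma evalT_t_mul (a : K) (f : R) : evalT hR a (t * f) = T σ δ a * evalT hR a f := by
  induction f using induction_on hR with
  | zero => simp
  | add f g hf hg => rw [mul_add, map_add, map_add, hf, hg, mul_add]
  | monomial u i =>
    rw [← mul_assoc, hR.t_mul, add_mul, mul_assoc, ← pow_succ', map_add, evalT_monomial,
      evalT_monomial, evalT_monomial, ← mul_assoc, T_mul_mulLeft hR.map_mul_delta, add_mul,
      mul_assoc, pow_succ']

lemma evalT_ι_mul (a u : K) (f : R) :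
    evalT hR a (ι u * f) = mulLeft u * evalT hR a f := by
  induction f using induction_on hR with
  | zero => simp
  | add f g hf hg => rw [mul_add, map_add, map_add, hf, hg, mul_add]
  | monomial v i =>
    rw [← mul_assoc, ← map_mul, evalT_monomial, evalT_monomial, mulLeft_mul, mul_assoc]

lemma evalT_pow_t_mul (a : K) (i : ℕ) (f : R) :
    evalT hR a (t ^ i * f) = T σ δ a ^ i * evalT hR a f := by
  induction i with
  | zero => simp
  | succ i ih => rw [pow_succ', mul_assoc, evalT_t_mul, ih, pow_succ', mul_assoc]

lemma evalT_mul (a : K) (f g : R) : evalT hR a (f * g) = evalT hR a f * evalT hR a g := by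
  induction f using induction_on hR with
  | zero => simp
  | add f f' hf hf' => rw [add_mul, map_add, map_add, hf, hf', add_mul]
  | monomial u i => rw [mul_assoc, evalT_ι_mul, evalT_pow_t_mul, evalT_monomial, mul_assoc]

lemma evalT_apply_mul {x : K} (hx : x ≠ 0) (a : K) (f : R) (y : K) :
    evalT hR a f (y * x) = evalT hR (conj σ δ x a) f y * x := by
  obtain ⟨c, rfl⟩ := hR.bijective_ofCoeffs.2 f
  simp only [evalT_ofCoeffs, polyT_apply_apply, Finsupp.sum, Finset.sum_mul, mul_assoc,
    pow_T_apply_mul hR.map_mul_delta hx]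

lemma evalT_apply_mul_of_mem_centralizer {a u : K} (hu : u ∈ centralizer σ δ a) (f : R)
    (y : K) : evalT hR a f (y * u) = evalT hR a f y * u := by
  rcases eq_or_ne u 0 with rfl | hu0
  · simp
  · conv_rhs => rw [← hu.resolve_left hu0]
    exact evalT_apply_mul hR hu0 a f y

/-- `f(T_a) x = f(T_{a^x}) 1 · x`, and `f(T_b) 1` is the right evaluation `f(b)`. -/
lemma exists_eq_mul_t_sub (eval : R → K → K)
    (heval : ∀ (f : R) (a : K), ∃ g : R, f - ι (eval f a) = g * (t - ι a))
    {a x : K} (hx : x ≠ 0) {f : R} (hf : evalT hR a f x = 0) :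
    ∃ g, f = g * (t - ι (conj σ δ x a)) := by
  set b := conj σ δ x a
  obtain ⟨g, hg⟩ := heval f b
  have hroot : evalT hR b f 1 = 0 := by
    rw [← one_mul x, evalT_apply_mul hR hx] at hf
    exact (mul_eq_zero.1 hf).resolve_right hx
  have heval0 : eval f b = 0 := by
    have h := congr($(congrArg (evalT hR b) hg) 1)
    simpa only [evalT_mul, AddMonoid.End.coe_mul, Function.comp_apply, evalT_sub_ι_apply,
      evalT_t, T_one hR.map_mul_delta, mul_one, sub_self, map_zero, hroot, zero_sub,
      neg_eq_zero] using h
  exact ⟨g, by rw [← hg, heval0, map_zero, sub_zero]⟩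

end Polynomial

section Degree

variable {R : Type*} [Ring R] (ι : K →+* R) (t : R)

def degreeLE (n : ℕ) : AddSubgroup R :=
  AddSubgroup.closure {f | ∃ u i, i ≤ n ∧ ι u * t ^ i = f}

variable {ι t}

lemma monomial_mem_degreeLE {n i : ℕ} (hi : i ≤ n) (u : K) : ι u * t ^ i ∈ degreeLE ι t n :=
  AddSubgroup.subset_closure ⟨u, i, hi, rfl⟩

lemma degreeLE_mono {m n : ℕ} (h : m ≤ n) : degreeLE ι t m ≤ degreeLE ι t n :=
  AddSubgroup.closure_mono fun _ ⟨u, i, hi, hf⟩ => ⟨u, i, hi.trans h, hf⟩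

lemma map_mem_of_mem_degreeLE {n : ℕ} (F : R →+ R) {H : AddSubgroup R}
    (hF : ∀ u i, i ≤ n → F (ι u * t ^ i) ∈ H) {f : R} (hf : f ∈ degreeLE ι t n) : F f ∈ H :=
  (AddSubgroup.closure_le (H.comap F)).2 (by rintro _ ⟨u, i, hi, rfl⟩; exact hF u i hi) hf

lemma ofCoeffs_mem_degreeLE {n : ℕ} {c : ℕ →₀ K} (hc : ∀ i, n < i → c i = 0) :
    ofCoeffs ι t c ∈ degreeLE ι t n := by
  rw [ofCoeffs_apply]
  refine AddSubgroup.sum_mem _ fun i hi => monomial_mem_degreeLE ?_ _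
  by_contra h
  exact Finsupp.mem_support_iff.1 hi (hc i (not_le.1 h))

lemma ι_mul_mem_degreeLE {n : ℕ} (u : K) {f : R} (hf : f ∈ degreeLE ι t n) :
    ι u * f ∈ degreeLE ι t n :=
  map_mem_of_mem_degreeLE (AddMonoidHom.mulLeft (ι u))
    (fun v i hi => by simpa [← mul_assoc, ← map_mul] using monomial_mem_degreeLE hi (u * v)) hf

variable (hR : IsOreExtension σ δ ι t)
include hR

lemma t_mul_mem_degreeLE {n : ℕ} {f : R} (hf : f ∈ degreeLE ι t n) :
    t * f ∈ degreeLE ι t (n + 1) := by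
  refine map_mem_of_mem_degreeLE (AddMonoidHom.mulLeft t) (fun u i hi => ?_) hf
  rw [AddMonoidHom.coe_mulLeft, ← mul_assoc, hR.t_mul, add_mul, mul_assoc, ← pow_succ']
  exact add_mem (monomial_mem_degreeLE (by omega) _) (monomial_mem_degreeLE (by omega) _)

lemma pow_mul_ι_mem_degreeLE (j : ℕ) (b : K) : t ^ j * ι b ∈ degreeLE ι t j := by
  induction j with
  | zero => simpa using monomial_mem_degreeLE le_rfl b (t := t) (n := 0)
  | succ j ih => simpa [pow_succ', mul_assoc] using t_mul_mem_degreeLE hR ih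

lemma mul_ι_mem_degreeLE {n : ℕ} {f : R} (hf : f ∈ degreeLE ι t n) (b : K) :
    f * ι b ∈ degreeLE ι t n :=
  map_mem_of_mem_degreeLE (AddMonoidHom.mulRight (ι b)) (fun u i hi => by
    simpa [mul_assoc] using
      ι_mul_mem_degreeLE u (degreeLE_mono hi (pow_mul_ι_mem_degreeLE hR i b))) hf

lemma mem_degreeLE_iff {n : ℕ} {f : R} :
    f ∈ degreeLE ι t n ↔ ∀ k, n < k → coeff hR f k = 0 := by
  refine ⟨fun hf => ?_, fun hf => ?_⟩
  · induction hf using AddSubgroup.closure_induction with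
    | mem _ h =>
      obtain ⟨u, i, hi, rfl⟩ := h
      intro k hk
      rw [coeff_monomial, Finsupp.single_apply, if_neg (by omega)]
    | zero => simp
    | add f g _ _ hf hg => intro k hk; simp [hf k hk, hg k hk]
    | neg f _ hf => intro k hk; simp [hf k hk]
  · rw [← ofCoeffs_coeff hR f]
    exact ofCoeffs_mem_degreeLE hf

lemma exists_eq_succ_of_mul_t_sub_mem_degreeLE {n : ℕ} {g : R} (hg : g ≠ 0) (b : K)
    (h : g * (t - ι b) ∈ degreeLE ι t n) : ∃ m, n = m + 1 ∧ g ∈ degreeLE ι t m := by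
  have hne : (coeff hR g).support.Nonempty :=
    Finsupp.support_nonempty_iff.2 ((AddEquiv.map_ne_zero_iff _).2 hg)
  set m := (coeff hR g).support.max' hne
  have hgm : g ∈ degreeLE ι t m := (mem_degreeLE_iff hR).2 fun k hk => by
    by_contra h
    exact not_le.2 hk ((coeff hR g).support.le_max' k (Finsupp.mem_support_iff.2 h))
  have htop : coeff hR (g * (t - ι b)) (m + 1) = coeff hR g m := by
    rw [mul_sub, map_sub, Finsupp.sub_apply, coeff_mul_t,
      (mem_degreeLE_iff hR).1 (mul_ι_mem_degreeLE hR hgm b) _ (by omega), sub_zero]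
  have hmn : m + 1 ≤ n := by
    by_contra hlt
    exact Finsupp.mem_support_iff.1 ((coeff hR g).support.max'_mem hne)
      (htop ▸ (mem_degreeLE_iff hR).1 h _ (by omega))
  exact ⟨n - 1, by omega, degreeLE_mono (by omega) hgm⟩

end Degree

section Descent

variable {R : Type*} [Ring R] {ι : K →+* R} {t : R} (hR : IsOreExtension σ δ ι t)

lemma exists_rightIndependent_image {a : K} {g h : R} {S : Finset K}
    (hS : IndependentModKer σ δ (evalT hR a h) a S)
    (hker : ∀ x ∈ S, evalT hR a (g * h) x = 0) :
    ∃ B : Finset K, (∀ y ∈ B, evalT hR a g y = 0) ∧ RightIndependent σ δ a B ∧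
      B.card = S.card := by
  classical
  refine ⟨S.image (evalT hR a h), ?_,
    hS.rightIndependent_image hR.map_mul_delta
      (fun _ hu => evalT_apply_mul_of_mem_centralizer hR hu h),
    card_image_of_injOn (hS.injOn hR.map_mul_delta)⟩
  simp only [mem_image, forall_exists_index, and_imp, forall_apply_eq_imp_iff₂]
  intro x hx
  rw [← hker x hx, evalT_mul]
  rfl

lemma T_apply_eq_of_evalT_t_sub {a b w : K} (h : evalT hR a (t - ι b) w = 0) :
    T σ δ a w = b * w := by
  rwa [evalT_sub_ι_apply, evalT_t, sub_eq_zero] at h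

lemma exists_descent_self {a x₀ : K} {B : Finset K} (hB : RightIndependent σ δ a B)
    (hx₀ : x₀ ∈ B) {g : R} (hker : ∀ x ∈ B, evalT hR a (g * (t - ι (conj σ δ x₀ a))) x = 0) :
    ∃ B' : Finset K, (∀ y ∈ B', evalT hR a g y = 0) ∧ RightIndependent σ δ a B' ∧
      B'.card + 1 = B.card := by
  classical
  have hx₀0 := hB.ne_zero hR.map_mul_delta hx₀
  have hS := hB.independentModKer_erase hx₀ fun w hw =>
    ⟨x₀⁻¹ * w, inv_mul_mem_centralizer_of_T_apply_eq hR.map_mul_delta hx₀0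
      (T_apply_eq_of_evalT_t_sub hR hw), (mul_inv_cancel_left₀ hx₀0 w).symm⟩
  obtain ⟨B', hB'ker, hB'ind, hcard⟩ :=
    exists_rightIndependent_image hR hS fun x hx => hker x (mem_of_mem_erase hx)
  exact ⟨B', hB'ker, hB'ind, by rw [hcard, card_erase_add_one hx₀]⟩

lemma exists_descent_of_not_conj {a a₀ x₀ : K} (hx₀ : x₀ ≠ 0)
    (hconj : ¬ ∃ x : K, x ≠ 0 ∧ a = conj σ δ x a₀) {B : Finset K}
    (hB : RightIndependent σ δ a B)
    {g : R} (hker : ∀ x ∈ B, evalT hR a (g * (t - ι (conj σ δ x₀ a₀))) x = 0) :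
    ∃ B' : Finset K, (∀ y ∈ B', evalT hR a g y = 0) ∧ RightIndependent σ δ a B' ∧
      B'.card = B.card := by
  refine exists_rightIndependent_image hR (hB.independentModKer fun w hw => ?_) hker
  by_contra hw0
  exact hconj ⟨w⁻¹ * x₀, mul_ne_zero (inv_ne_zero hw0) hx₀,
    eq_conj_of_T_apply_eq hR.map_mul_delta hx₀ hw0 (T_apply_eq_of_evalT_t_sub hR hw)⟩

theorem sum_card_le_of_mem_degreeLE (eval : R → K → K)
    (heval : ∀ (f : R) (a : K), ∃ g : R, f - ι (eval f a) = g * (t - ι a))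
    {r : ℕ} (as : Fin r → K)
    (hdistinct : ∀ i j : Fin r, i ≠ j → ¬ ∃ x : K, x ≠ 0 ∧ as j = conj σ δ x (as i))
    (n : ℕ) {f : R} (hf : f ∈ degreeLE ι t n) (hf0 : f ≠ 0) (B : Fin r → Finset K)
    (hker : ∀ i, ∀ x ∈ B i, evalT hR (as i) f x = 0)
    (hB : ∀ i, RightIndependent σ δ (as i) (B i)) :
    ∑ i, (B i).card ≤ n := by
  classical
  induction n using Nat.strong_induction_on generalizing f B with
  | _ n ih =>
  by_cases hempty : ∀ i, B i = ∅
  · simp [hempty]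
  push Not at hempty
  obtain ⟨i₀, x₀, hx₀⟩ := hempty
  have hx₀0 := (hB i₀).ne_zero hR.map_mul_delta hx₀
  obtain ⟨g, rfl⟩ := exists_eq_mul_t_sub hR eval heval hx₀0 (hker i₀ x₀ hx₀)
  have hg0 := left_ne_zero_of_mul hf0
  obtain ⟨m, rfl, hg⟩ := exists_eq_succ_of_mul_t_sub_mem_degreeLE hR hg0 _ hf
  have hstep : ∀ i, ∃ B' : Finset K, (∀ y ∈ B', evalT hR (as i) g y = 0) ∧
      RightIndependent σ δ (as i) B' ∧ (B i).card = B'.card + if i = i₀ then 1 else 0 := by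
    intro i
    by_cases hi : i = i₀
    · subst hi
      obtain ⟨B', hB'ker, hB'ind, hcard⟩ := exists_descent_self hR (hB i) hx₀ (hker i)
      exact ⟨B', hB'ker, hB'ind, by simp [hcard]⟩
    · obtain ⟨B', hB'ker, hB'ind, hcard⟩ :=
        exists_descent_of_not_conj hR hx₀0 (hdistinct i₀ i (Ne.symm hi)) (hB i) (hker i)
      exact ⟨B', hB'ker, hB'ind, by simp [hcard, hi]⟩
  choose B' hB'ker hB'ind hcard using hstep
  calc ∑ i, (B i).card = ∑ i, (B' i).card + 1 := by simp [hcard, sum_add_distrib]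
    _ ≤ m + 1 := by gcongr; exact ih m (by omega) hg hg0 B' hB'ker hB'ind

end Descent

end OreExtension

theorem sum_kernel_dims_le_degree_general {K R : Type*} [DivisionRing K] [Ring R]
    (ι : K →+* R) (t : R) (σ : K →+* K) (δ : K →+ K)
    (hδ : ∀ a b : K, δ (a * b) = σ a * δ b + δ a * b)
    (hrel : ∀ x : K, t * ι x = ι (σ x) * t + ι (δ x))
    (hbasis : ∀ f : R, ∃! c : ℕ →₀ K, f = c.sum fun i b => ι b * t ^ i)
    (eval : R → K → K)
    (heval : ∀ (f : R) (a : K), ∃ g : R, f - ι (eval f a) = g * (t - ι a))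
    (f : R) (c : ℕ →₀ K) (n : ℕ)
    (hc : f = c.sum fun i b => ι b * t ^ i)
    (hlead : c n ≠ 0) (hdeg : ∀ i : ℕ, n < i → c i = 0)
    (r : ℕ) (as : Fin r → K)
    (hdistinct : ∀ i j : Fin r, i ≠ j →
      ¬ ∃ x : K, x ≠ 0 ∧ as j = σ x * as i * x⁻¹ + δ x * x⁻¹) :
    ∀ B : Fin r → Finset K,
      (∀ i : Fin r, ∀ x ∈ B i,
        (c.sum fun j b => b * (fun y => σ y * as i + δ y)^[j] x) = 0) →
      (∀ (i : Fin r) (g : K → K),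
        (∀ x : K, g x = 0 ∨ σ (g x) * as i * (g x)⁻¹ + δ (g x) * (g x)⁻¹ = as i) →
        ∑ x ∈ B i, x * g x = 0 → ∀ x ∈ B i, g x = 0) →
      ∑ i : Fin r, (B i).card ≤ n := by
  intro B hker hind
  have hR : OreExtension.IsOreExtension σ δ ι t :=
    ⟨hδ, hrel, (Function.bijective_iff_existsUnique _).2 fun f => by
      simpa [OreExtension.ofCoeffs_apply, eq_comm] using hbasis f⟩
  obtain rfl : f = OreExtension.ofCoeffs ι t c := hc.trans (OreExtension.ofCoeffs_apply ι t c).symm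
  refine OreExtension.sum_card_le_of_mem_degreeLE hR eval heval as hdistinct n
    (OreExtension.ofCoeffs_mem_degreeLE hdeg) ?_ B (fun i x hx => ?_) hind
  · rw [← map_zero (OreExtension.ofCoeffs ι t), hR.bijective_ofCoeffs.injective.ne_iff]
    exact fun h => hlead (by simp [h])
  · rw [OreExtension.evalT_ofCoeffs, OreExtension.polyT_apply_apply]
    exact hker i x hx

/-- (Lam–Leroy dimension bound.) Let `K` be a division ring, `R = K[t;σ,δ]` an Ore
extension, and `f ≠ 0` of degree `n` whose right roots lie in the pairwise distinct
(σ,δ)-conjugacy classes `Δ(a₁),…,Δ(a_r)`.  Then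
`Σᵢ dim_{C(aᵢ)} ker f(T_{aᵢ}) ≤ n`, expressed as: for any choice of finite subsets
`Bᵢ ⊆ ker f(T_{aᵢ})` that are right linearly independent over the centralizer
`C(aᵢ) = {c : c = 0 ∨ σ(c)aᵢc⁻¹ + δ(c)c⁻¹ = aᵢ}`, one has `Σᵢ |Bᵢ| ≤ n`.
Here `T_b(x) = σ(x)b + δ(x)` and `f(T_b) = Σ cⱼ T_bʲ`. -/
theorem sum_kernel_dims_le_degree {K R : Type*} [DivisionRing K] [Ring R]
    (ι : K →+* R) (t : R) (σ : K →+* K) (δ : K →+ K)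
    (hδ : ∀ a b : K, δ (a * b) = σ a * δ b + δ a * b)
    (hrel : ∀ x : K, t * ι x = ι (σ x) * t + ι (δ x))
    (hbasis : ∀ f : R, ∃! c : ℕ →₀ K, f = c.sum fun i b => ι b * t ^ i)
    (eval : R → K → K)
    (heval : ∀ (f : R) (a : K), ∃ g : R, f - ι (eval f a) = g * (t - ι a))
    (f : R) (c : ℕ →₀ K) (n : ℕ)
    (hc : f = c.sum fun i b => ι b * t ^ i)
    (hlead : c n ≠ 0) (hdeg : ∀ i : ℕ, n < i → c i = 0)
    (r : ℕ) (as : Fin r → K)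
    (hdistinct : ∀ i j : Fin r, i ≠ j →
      ¬ ∃ x : K, x ≠ 0 ∧ as j = σ x * as i * x⁻¹ + δ x * x⁻¹)
    (hroots : ∀ b : K, eval f b = 0 →
      ∃ (i : Fin r) (x : K), x ≠ 0 ∧ b = σ x * as i * x⁻¹ + δ x * x⁻¹) :
    ∀ B : Fin r → Finset K,
      (∀ i : Fin r, ∀ x ∈ B i,
        (c.sum fun j b => b * (fun y => σ y * as i + δ y)^[j] x) = 0) →
      (∀ (i : Fin r) (g : K → K),
        (∀ x : K, g x = 0 ∨ σ (g x) * as i * (g x)⁻¹ + δ (g x) * (g x)⁻¹ = as i) →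
        ∑ x ∈ B i, x * g x = 0 → ∀ x ∈ B i, g x = 0) →
      ∑ i : Fin r, (B i).card ≤ n :=
  sum_kernel_dims_le_degree_general ι t σ δ hδ hrel hbasis eval heval f c n hc hlead hdeg r as
    hdistinct
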